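/- arXiv:1605.05857 — 5 statements merged into one kernel-verified Lean document; each statement's English description precedes it below -/
import Mathlib

section
/- If G is a 2k-regular multigraph, then its edge set can be decomposed into k edge-disjoint 2-factors. -/
/-!
Since every degree is even, the edges can be oriented along Euler trails so that every vertex
gets in-degree and out-degree `k`. Splitting each vertex into a tail copy and a head copy turns
the arcs into a `k`-regular bipartite multigraph, which has a perfect matching by Hall's theorem;
removing matchings one after another splits the arcs into `k` classes in which every vertex has
in- and out-degree `1`. Forgetting the orientation, each class is a 2-factor.
-/

/-- The degree of a vertex `v` in a multigraph given as a list of (non-loop) edges: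
the number of edges incident to `v`, counted with multiplicity. -/
def mdeg {V : Type*} [DecidableEq V] (D : List (V × V)) (v : V) : ℕ :=
  (D.filter (fun p => p.1 = v ∨ p.2 = v)).length

open Finset Function

section Counting

variable {ι : Type*}

theorem card_filter_mem_eq_mul {V : Type*} [DecidableEq V] {s : Finset ι} {g : ι → V} {k : ℕ}
    (hg : ∀ v, #{i ∈ s | g i = v} = k) (A : Finset V) : #{i ∈ s | g i ∈ A} = k * #A := by
  rw [card_eq_sum_card_fiberwise (f := g) (s := {i ∈ s | g i ∈ A}) (t := A)
    fun i hi => (mem_filter.1 hi).2, sum_const_nat fun v hv => ?_, mul_comm]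
  rw [filter_filter, ← hg v]
  congr 1
  exact filter_congr fun i _ => ⟨And.right, fun h => ⟨h ▸ hv, h⟩⟩

theorem card_filter_get_eq_countP {α : Type*} (l : List α) (p : α → Prop) [DecidablePred p] :
    #{i : Fin l.length | p (l.get i)} = l.countP p := by
  induction l with
  | nil => simp
  | cons a l ih =>
    rw [List.countP_cons, ← ih]
    exact (Fin.card_filter_univ_succ' (n := l.length) _).trans (by simp [add_comm]; congr)

variable [DecidableEq ι]

theorem card_filter_update_of_mem {α : Type*} {s : Finset ι} {i : ι} (hi : i ∈ s) (d : ι → α)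
    (z : α) (p : α → Prop) [DecidablePred p] :
    #{j ∈ s | p (update d i z j)} = #{j ∈ s.erase i | p (d j)} + if p z then 1 else 0 := by
  rw [card_filter, card_filter, ← sum_erase_add _ _ hi, update_self]
  congr 1
  exact sum_congr rfl fun j hj => by rw [update_of_ne (ne_of_mem_erase hj)]

theorem card_filter_sdiff_add_card_filter {s M : Finset ι} (hM : M ⊆ s) (p : ι → Prop)
    [DecidablePred p] : #{i ∈ s \ M | p i} + #{i ∈ M | p i} = #{i ∈ s | p i} := by
  rw [← card_union_of_disjoint (disjoint_filter_filter sdiff_disjoint), ← filter_union,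
    sdiff_union_of_subset hM]

end Counting

section Arcs

variable {ι V : Type*} [DecidableEq ι] [DecidableEq V]

theorem card_filter_fst_or_snd {s : Finset ι} {d : ι → V × V} (hd : ∀ i ∈ s, (d i).1 ≠ (d i).2)
    (v : V) :
    #{i ∈ s | (d i).1 = v ∨ (d i).2 = v} = #{i ∈ s | (d i).1 = v} + #{i ∈ s | (d i).2 = v} := by
  rw [filter_or, card_union_of_disjoint]
  exact disjoint_filter.2 fun i hi h1 h2 => hd i hi (h1.trans h2.symm)

/-- The extra arc `a → b` closes up an Euler trail from `b` to `a`; carrying it along lets the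
edges be oriented one at a time. -/
theorem exists_orientation_add_arc_balanced (e : ι → V × V) (s : Finset ι) (a b : V)
    (heven : ∀ v, Even (#{i ∈ s | (e i).1 = v} + #{i ∈ s | (e i).2 = v} +
      (if a = v then 1 else 0) + if b = v then 1 else 0)) :
    ∃ d : ι → V × V, (∀ i, d i = e i ∨ d i = (e i).swap) ∧ ∀ v,
      #{i ∈ s | (d i).1 = v} + (if a = v then 1 else 0) =
        #{i ∈ s | (d i).2 = v} + if b = v then 1 else 0 := by
  induction s using Finset.strongInduction generalizing a b with
  | H s ih =>
  rcases s.eq_empty_or_nonempty with rfl | hs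
  · obtain rfl : a = b := by
      by_contra hab
      simpa [hab, Ne.symm hab] using heven a
    exact ⟨e, fun _ => Or.inl rfl, by simp⟩
  -- Orienting the edge `i` as `z` replaces the extra arc `a → b` by `z.1 → b'`.
  obtain ⟨i, hi, z, hz, b', hb'⟩ : ∃ i ∈ s, ∃ z : V × V, (z = e i ∨ z = (e i).swap) ∧
      ∃ b' : V, ∀ v, (if a = v then 1 else 0) + (if b' = v then 1 else 0) =
        (if z.2 = v then 1 else 0) + if b = v then 1 else 0 := by
    by_cases hab : a = b
    · obtain ⟨i, hi⟩ := hs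
      exact ⟨i, hi, e i, Or.inl rfl, (e i).2, fun v => by rw [hab, add_comm]⟩
    · have hpos : 0 < #{i ∈ s | (e i).1 = a} ∨ 0 < #{i ∈ s | (e i).2 = a} := by
        have := heven a
        rw [Nat.even_iff, if_pos rfl, if_neg (Ne.symm hab)] at this
        omega
      rcases hpos with h | h <;> obtain ⟨i, hi⟩ := card_pos.1 h <;> rw [mem_filter] at hi
      · exact ⟨i, hi.1, (e i).swap, Or.inr rfl, b, fun v => by rw [Prod.snd_swap, hi.2]⟩
      · exact ⟨i, hi.1, e i, Or.inl rfl, b, fun v => by rw [hi.2]⟩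
  have hz_ends : ∀ v, (if (e i).1 = v then 1 else 0) + (if (e i).2 = v then 1 else 0) =
      (if z.1 = v then 1 else 0) + (if z.2 = v then 1 else 0) := by
    rcases hz with rfl | rfl <;> simp [add_comm]
  obtain ⟨d, hd, hbal⟩ := ih (s.erase i) (erase_ssubset hi) z.1 b' fun v => by
    have h1 := card_filter_update_of_mem hi e (e i) (fun q => q.1 = v)
    have h2 := card_filter_update_of_mem hi e (e i) (fun q => q.2 = v)
    simp only [update_eq_self] at h1 h2
    have := heven v
    rw [Nat.even_iff] at this ⊢
    have := hz_ends v
    have := hb' v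
    omega
  refine ⟨update d i z, fun j => ?_, fun v => ?_⟩
  · rcases eq_or_ne j i with rfl | hj
    · simpa using hz
    · simpa [update_of_ne hj] using hd j
  · have h1 := card_filter_update_of_mem hi d z (fun q => q.1 = v)
    have h2 := card_filter_update_of_mem hi d z (fun q => q.2 = v)
    have := hbal v
    have := hb' v
    omega

theorem exists_balanced_orientation (e : ι → V × V) (s : Finset ι)
    (heven : ∀ v, Even (#{i ∈ s | (e i).1 = v} + #{i ∈ s | (e i).2 = v})) :
    ∃ d : ι → V × V, (∀ i, d i = e i ∨ d i = (e i).swap) ∧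
      ∀ v, #{i ∈ s | (d i).1 = v} = #{i ∈ s | (d i).2 = v} := by
  rcases s.eq_empty_or_nonempty with rfl | ⟨i, -⟩
  · exact ⟨e, fun _ => Or.inl rfl, by simp⟩
  obtain ⟨d, hd, hbal⟩ := exists_orientation_add_arc_balanced e s (e i).1 (e i).1 fun v => by
    rw [add_assoc, ← two_mul]
    exact (heven v).add (even_two_mul _)
  exact ⟨d, hd, fun v => add_right_cancel (hbal v)⟩

end Arcs

section Diregular

variable {ι V : Type*} [DecidableEq V]

def IsDiregular (d : ι → V × V) (s : Finset ι) (k : ℕ) : Prop :=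
  ∀ v, #{i ∈ s | (d i).1 = v} = k ∧ #{i ∈ s | (d i).2 = v} = k

variable {d : ι → V × V} {s : Finset ι} {k : ℕ}

theorem IsDiregular.eq_empty (hd : IsDiregular d s 0) : s = ∅ :=
  eq_empty_of_forall_notMem fun i hi =>
    (filter_eq_empty_iff.1 (card_eq_zero.1 (hd (d i).1).1)) hi rfl

theorem IsDiregular.sdiff [DecidableEq ι] {M : Finset ι} {l : ℕ} (hd : IsDiregular d s (k + l))
    (hM : M ⊆ s) (hdM : IsDiregular d M l) : IsDiregular d (s \ M) k := fun v => by
  have h1 := card_filter_sdiff_add_card_filter hM fun i => (d i).1 = v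
  have h2 := card_filter_sdiff_add_card_filter hM fun i => (d i).2 = v
  have := hd v
  have := hdM v
  constructor <;> omega

/-- Hall's theorem, applied to the bipartite multigraph joining the tail copy of each vertex to
the head copies of its out-neighbours. -/
theorem IsDiregular.exists_subset_isDiregular_one [Fintype V] (hd : IsDiregular d s k)
    (hk : 0 < k) : ∃ M ⊆ s, IsDiregular d M 1 := by
  classical
  have hall : ∀ A : Finset V, #A ≤ #{w | ∃ v ∈ A, ∃ i ∈ s, d i = (v, w)} := fun A => by
    refine Nat.le_of_mul_le_mul_left ?_ hk
    calc k * #A = #{i ∈ s | (d i).1 ∈ A} := (card_filter_mem_eq_mul (fun v => (hd v).1) A).symm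
      _ ≤ #{i ∈ s | (d i).2 ∈ ({w | ∃ v ∈ A, ∃ i ∈ s, d i = (v, w)} : Finset V)} :=
        card_le_card fun i hi => by
          simp only [mem_filter, mem_univ, true_and] at hi ⊢
          exact ⟨hi.1, (d i).1, hi.2, i, hi.1, rfl⟩
      _ = k * _ := card_filter_mem_eq_mul (fun v => (hd v).2) _
  obtain ⟨σ, hσ, hσs⟩ := (Fintype.all_card_le_filter_rel_iff_exists_injective _).1 hall
  choose m hms hm using hσs
  refine ⟨univ.image m, image_subset_iff.2 fun v _ => hms v, fun v => ⟨?_, ?_⟩⟩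
  · refine card_eq_one.2 ⟨m v, ?_⟩
    ext i
    simp only [mem_filter, mem_image, mem_univ, true_and, mem_singleton]
    constructor
    · rintro ⟨⟨u, rfl⟩, hu⟩
      simp only [hm] at hu
      rw [hu]
    · rintro rfl
      simp [hm]
  · obtain ⟨u, rfl⟩ := Finite.surjective_of_injective hσ v
    refine card_eq_one.2 ⟨m u, ?_⟩
    ext i
    simp only [mem_filter, mem_image, mem_univ, true_and, mem_singleton]
    constructor
    · rintro ⟨⟨w, rfl⟩, hw⟩
      simp only [hm] at hw
      rw [hσ hw]
    · rintro rfl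
      simp [hm]

theorem IsDiregular.exists_coloring [DecidableEq ι] [Fintype V] (hd : IsDiregular d s k) :
    ∃ f : ι → ℕ, (∀ i ∈ s, f i < k) ∧ ∀ c < k, IsDiregular d {i ∈ s | f i = c} 1 := by
  induction k generalizing s with
  | zero => exact ⟨0, by simp [hd.eq_empty], by simp⟩
  | succ k ih =>
    obtain ⟨M, hMs, hM⟩ := hd.exists_subset_isDiregular_one k.succ_pos
    obtain ⟨f, hfk, hf⟩ := ih (hd.sdiff hMs hM)
    refine ⟨fun i => if i ∈ M then 0 else f i + 1, fun i hi => ?_, fun c hc => ?_⟩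
    · by_cases hiM : i ∈ M
      · simp [hiM]
      · simpa [hiM] using hfk i (mem_sdiff.2 ⟨hi, hiM⟩)
    · rcases c with _ | c
      · convert hM using 1
        ext i
        by_cases hiM : i ∈ M
        · simp [hiM, hMs hiM]
        · simp [hiM]
      · convert hf c (by omega) using 1
        ext i
        by_cases hiM : i ∈ M <;> simp [hiM]

end Diregular

/-- **Petersen's 2-factor theorem.** If every vertex of a (loopless) multigraph `D`
has degree exactly `2 * k`, then the edges of `D` can be partitioned into `k`
classes (a coloring `f` of the edges), each of which is a 2-factor, i.e. each
vertex is incident to exactly 2 edges of each class. -/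
theorem petersen_two_factor {V : Type*} [Fintype V] [DecidableEq V]
    (k : ℕ) (D : List (V × V)) (hloop : ∀ p ∈ D, p.1 ≠ p.2)
    (hreg : ∀ v : V, mdeg D v = 2 * k) :
    ∃ f : Fin D.length → Fin k,
      ∀ (c : Fin k) (v : V),
        ((Finset.univ : Finset (Fin D.length)).filter
          (fun i => f i = c ∧ ((D.get i).1 = v ∨ (D.get i).2 = v))).card = 2 := by
  have hdeg (v : V) : #{i | (D.get i).1 = v ∨ (D.get i).2 = v} = 2 * k := by
    rw [card_filter_get_eq_countP D (fun p => p.1 = v ∨ p.2 = v), List.countP_eq_length_filter,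
      ← hreg v, mdeg]
  have hloop' (i : Fin D.length) : (D.get i).1 ≠ (D.get i).2 := hloop _ (D.get_mem i)
  obtain ⟨d, hd, hbal⟩ := exists_balanced_orientation D.get univ fun v => by
    rw [← card_filter_fst_or_snd fun i _ => hloop' i, hdeg]
    exact even_two_mul k
  have hinc (i : Fin D.length) (v : V) :
      ((d i).1 = v ∨ (d i).2 = v) ↔ ((D.get i).1 = v ∨ (D.get i).2 = v) := by
    rcases hd i with h | h <;> simp only [h, Prod.fst_swap, Prod.snd_swap, or_comm]
  have hloop_d (i : Fin D.length) : (d i).1 ≠ (d i).2 := by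
    rcases hd i with h | h <;> rw [h]
    exacts [hloop' i, (hloop' i).symm]
  have hdreg : IsDiregular d univ k := fun v => by
    have hsum := card_filter_fst_or_snd (s := univ) (fun i _ => hloop_d i) v
    simp only [hinc, hdeg] at hsum
    have := hbal v
    constructor <;> omega
  obtain ⟨f, hfk, hf⟩ := hdreg.exists_coloring
  refine ⟨fun i => ⟨f i, hfk i (mem_univ i)⟩, fun c v => ?_⟩
  calc #{i | (⟨f i, _⟩ : Fin k) = c ∧ ((D.get i).1 = v ∨ (D.get i).2 = v)}
      = #{i ∈ {i | f i = c} | (d i).1 = v ∨ (d i).2 = v} := by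
        simp only [filter_filter, Fin.ext_iff, hinc]
    _ = 1 + 1 := by
      rw [card_filter_fst_or_snd fun i _ => hloop_d i, (hf c c.isLt v).1, (hf c c.isLt v).2]
end

section
/- Let D be a multigraph on n vertices with 2n-5 edges, every vertex of degree at most n-1, and let B = {v : d(v) ≥ n-2}. If |B| = 3, then every two vertices of B are joined by an edge; moreover D has an isolated vertex. -/
lemma mdeg_cons {V : Type*} [DecidableEq V] (p : V × V) (D : List (V × V)) (v : V) :
    mdeg (p :: D) v = (if p.1 = v ∨ p.2 = v then 1 else 0) + mdeg D v := by
  simp only [mdeg, List.filter_cons]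
  by_cases h : p.1 = v ∨ p.2 = v <;> simp [h] <;> omega

lemma sum_mdeg {V : Type*} [Fintype V] [DecidableEq V] (D : List (V × V))
    (hloop : ∀ p ∈ D, p.1 ≠ p.2) :
    ∑ v, mdeg D v = 2 * D.length := by
  induction D with
  | nil => simp [mdeg]
  | cons p D ih =>
    have hp : p.1 ≠ p.2 := hloop p (by simp)
    rw [Finset.sum_congr rfl (fun v _ => mdeg_cons p D v), Finset.sum_add_distrib,
      ih (fun q hq => hloop q (by simp [hq]))]
    have h2 : ∑ v : V, (if p.1 = v ∨ p.2 = v then 1 else 0) = 2 := by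
      rw [← Finset.card_filter]
      have : Finset.univ.filter (fun v => p.1 = v ∨ p.2 = v) = {p.1, p.2} := by
        ext v; simp [eq_comm, or_comm]
      simp [this, Finset.card_insert_of_notMem, hp]
    rw [h2]; simp [List.length_cons]; ring

lemma mdeg_add_le {V : Type*} [DecidableEq V] (D : List (V × V)) (z₁ z₂ : V)
    (hloop : ∀ p ∈ D, p.1 ≠ p.2) (hne : z₁ ≠ z₂)
    (h1 : (z₁, z₂) ∉ D) (h2 : (z₂, z₁) ∉ D) :
    mdeg D z₁ + mdeg D z₂ ≤ D.length := by
  induction D with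
  | nil => simp [mdeg]
  | cons p D ih =>
    have hp : p.1 ≠ p.2 := hloop p (by simp)
    have h1' : p ≠ (z₁, z₂) := by rintro rfl; exact h1 (by simp)
    have h2' : p ≠ (z₂, z₁) := by rintro rfl; exact h2 (by simp)
    have key : ¬((p.1 = z₁ ∨ p.2 = z₁) ∧ (p.1 = z₂ ∨ p.2 = z₂)) := by
      rintro ⟨h | h, h' | h'⟩
      · exact hne (h ▸ h' ▸ rfl)
      · exact h1' (Prod.ext h h')
      · exact h2' (Prod.ext h' h)
      · exact hne (h ▸ h' ▸ rfl)
    have ihD := ih (fun q hq => hloop q (by simp [hq]))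
      (fun hm => h1 (by simp [hm])) (fun hm => h2 (by simp [hm]))
    rw [mdeg_cons, mdeg_cons, List.length_cons]
    by_cases ha : p.1 = z₁ ∨ p.2 = z₁ <;> by_cases hb : p.1 = z₂ ∨ p.2 = z₂ <;>
      simp [ha, hb] at key ⊢ <;> omega

/-- Let `D` be a multigraph on `n` vertices with `2n - 5` edges, all degrees at most
`n - 1`, and let `B = {v : d(v) ≥ n - 2}`. If `|B| = 3`, then every two distinct
vertices of `B` are joined by an edge, and `D` has an isolated vertex. -/
theorem high_degree_triple_adjacent_and_isolated {V : Type*} [Fintype V] [DecidableEq V]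
    (D : List (V × V)) (hloop : ∀ p ∈ D, p.1 ≠ p.2)
    (hE : D.length = 2 * Fintype.card V - 5)
    (hΔ : ∀ v, mdeg D v ≤ Fintype.card V - 1)
    (hB : (Finset.univ.filter (fun v => Fintype.card V - 2 ≤ mdeg D v)).card = 3) :
    (∀ z₁ ∈ Finset.univ.filter (fun v => Fintype.card V - 2 ≤ mdeg D v),
      ∀ z₂ ∈ Finset.univ.filter (fun v => Fintype.card V - 2 ≤ mdeg D v),
        z₁ ≠ z₂ → ((z₁, z₂) ∈ D ∨ (z₂, z₁) ∈ D)) ∧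
    ∃ x : V, mdeg D x = 0 := by
  set n := Fintype.card V with hn
  have hn3 : 3 ≤ n := by
    rw [← hB]; exact Finset.card_filter_le _ _
  constructor
  · intro z₁ hz₁ z₂ hz₂ hne
    rw [Finset.mem_filter] at hz₁ hz₂
    by_contra h
    push_neg at h
    have := mdeg_add_le D z₁ z₂ hloop hne h.1 h.2
    omega
  · by_contra h
    push_neg at h
    have hpos : ∀ x : V, 1 ≤ mdeg D x := fun x => Nat.one_le_iff_ne_zero.2 (h x)
    have hsum := sum_mdeg D hloop
    set B := Finset.univ.filter (fun v => n - 2 ≤ mdeg D v) with hBdef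
    have hsplit : ∑ v ∈ B, mdeg D v + ∑ v ∈ Finset.univ.filter (fun v => ¬ (n - 2 ≤ mdeg D v)), mdeg D v = ∑ v : V, mdeg D v :=
      Finset.sum_filter_add_sum_filter_not _ _ _
    have hBlow : 3 * (n - 2) ≤ ∑ v ∈ B, mdeg D v := by
      calc 3 * (n - 2) = ∑ _v ∈ B, (n - 2) := by rw [Finset.sum_const, hB]; ring
        _ ≤ ∑ v ∈ B, mdeg D v :=
          Finset.sum_le_sum (fun v hv => (Finset.mem_filter.1 hv).2)
    have hcard : (Finset.univ.filter (fun v => ¬ (n - 2 ≤ mdeg D v))).card = n - 3 := by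
      have := Finset.card_filter_add_card_filter_not
        (s := Finset.univ) (p := fun v => n - 2 ≤ mdeg D v)
      rw [hB] at this
      simp only [Finset.card_univ, ← hn] at this
      omega
    have hClow : (n - 3) * 1 ≤ ∑ v ∈ Finset.univ.filter (fun v => ¬ (n - 2 ≤ mdeg D v)), mdeg D v := by
      calc (n - 3) * 1 = ∑ _v ∈ Finset.univ.filter (fun v => ¬ (n - 2 ≤ mdeg D v)), 1 := by
            rw [Finset.sum_const, hcard]; ring
        _ ≤ _ := Finset.sum_le_sum (fun v _ => hpos v)
    omega
end

section
/- Let n ≥ 4 and let D be the demand multigraph on n vertices consisting of two disjoint bundles: vertices U,V joined by n-2 parallel edges and vertices X,Y joined by n-2 parallel edges (all other vertices isolated). Then D cannot be resolved in Kₙ: there is no collection of 2n-4 pairwise edge-disjoint paths in the complete graph Kₙ realizing the demand edges. -/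
/-- A demand multigraph, given as a list of demand edges (ordered pairs), can be
resolved in the complete graph: there is an assignment of a path in `K_V` to each
demand edge, connecting its endpoints, such that the paths are pairwise edge-disjoint. -/
def Resolvable {V : Type*} (D : List (V × V)) : Prop :=
  ∃ P : (i : Fin D.length) → (⊤ : SimpleGraph V).Walk (D.get i).1 (D.get i).2,
    (∀ i, (P i).IsPath) ∧
    ∀ i j, i ≠ j → ∀ e ∈ (P i).edges, e ∉ (P j).edges

/-!
Every vertex of `Kₙ` has only `n - 1` incident edges. The `n - 2` edge-disjoint `x`–`y` paths
use `n - 2` of the edges at `x`, so no `u`–`v` path can pass through `x`, which would cost two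
more; likewise for `y`. Hence the `n - 2` edge-disjoint `u`–`v` paths leave `u` along distinct
edges avoiding `x` and `y`, of which there are only `n - 3`.
-/

open Finset

theorem List.card_filter_get_eq_count {α : Type*} [DecidableEq α] (l : List α) (a : α) :
    #{i : Fin l.length | l.get i = a} = l.count a :=
  Fin.card_filter_univ_eq_vector_get_eq_count a ⟨l, rfl⟩

namespace SimpleGraph

variable {V ι : Type*} [DecidableEq V] {G : SimpleGraph V}

namespace Walk

variable {a b z : V}

def edgesAt (p : G.Walk a b) (z : V) : Finset (Sym2 V) := {e ∈ p.edges.toFinset | z ∈ e}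

theorem mem_edgesAt {p : G.Walk a b} {e : Sym2 V} : e ∈ p.edgesAt z ↔ e ∈ p.edges ∧ z ∈ e := by
  simp [edgesAt]

theorem edgesAt_reverse (p : G.Walk a b) : p.reverse.edgesAt z = p.edgesAt z := by
  ext; simp [mem_edgesAt]

theorem edgesAt_start_nonempty (p : G.Walk a b) (hab : a ≠ b) : (p.edgesAt a).Nonempty := by
  cases p with
  | nil => exact absurd rfl hab
  | cons _ _ => exact ⟨_, mem_edgesAt.2 ⟨List.mem_cons_self, Sym2.mem_mk_left _ _⟩⟩

theorem edgesAt_end_nonempty (p : G.Walk a b) (hab : a ≠ b) : (p.edgesAt b).Nonempty := by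
  rw [← edgesAt_reverse]
  exact p.reverse.edgesAt_start_nonempty hab.symm

theorem one_lt_card_edgesAt {p : G.Walk a b} (hp : p.IsPath) (hz : z ∈ p.support)
    (hza : z ≠ a) (hzb : z ≠ b) : 1 < #(p.edgesAt z) := by
  obtain ⟨e, he⟩ := (p.takeUntil z hz).edgesAt_end_nonempty hza.symm
  obtain ⟨f, hf⟩ := (p.dropUntil z hz).edgesAt_start_nonempty hzb
  rw [mem_edgesAt] at he hf
  have hnodup := hp.isTrail.edges_nodup
  rw [← p.take_spec hz, edges_append] at hnodup
  refine one_lt_card.2 ⟨e, mem_edgesAt.2 ⟨?_, he.2⟩, f, mem_edgesAt.2 ⟨?_, hf.2⟩, ?_⟩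
  · exact p.edges_takeUntil_subset_edges hz he.1
  · exact p.edges_dropUntil_subset_edges hz hf.1
  · rintro rfl
    exact List.disjoint_of_nodup_append hnodup he.1 hf.1

end Walk

variable {s t : ι → V} (P : ∀ i, G.Walk (s i) (t i))

/-- Edge-disjoint walks meet `z` in distinct edges `s(z, w)` with `w` in their supports. -/
theorem sum_card_edgesAt_le_card
    (hdisj : Pairwise fun i j => (P i).edges.Disjoint (P j).edges) (S : Finset ι) (z : V)
    {W : Finset V} (hW : ∀ i ∈ S, ∀ w ∈ (P i).support, w ≠ z → w ∈ W) :
    ∑ i ∈ S, #((P i).edgesAt z) ≤ #W := by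
  have hpairwise : (S : Set ι).PairwiseDisjoint fun i => (P i).edgesAt z :=
    fun i _ j _ hij => Finset.disjoint_left.2 fun e hei hej =>
      hdisj hij (Walk.mem_edgesAt.1 hei).1 (Walk.mem_edgesAt.1 hej).1
  have hsub : S.biUnion (fun i => (P i).edgesAt z) ⊆ W.image (fun w => s(z, w)) := by
    intro e he
    obtain ⟨i, hi, he⟩ := mem_biUnion.1 he
    obtain ⟨he, hze⟩ := Walk.mem_edgesAt.1 he
    obtain ⟨w, rfl⟩ := Sym2.mem_iff_exists.1 hze
    have hzw : z ≠ w := G.ne_of_adj ((P i).adj_of_mem_edges he)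
    exact mem_image_of_mem _ (hW i hi w ((P i).snd_mem_support_of_mem_edges he) hzw.symm)
  calc ∑ i ∈ S, #((P i).edgesAt z)
      = #(S.biUnion fun i => (P i).edgesAt z) := (card_biUnion hpairwise).symm
    _ ≤ #(W.image fun w => s(z, w)) := card_le_card hsub
    _ ≤ #W := card_image_le

variable [Fintype V]

theorem notMem_support_of_card_sub_two_le
    (hdisj : Pairwise fun i j => (P i).edges.Disjoint (P j).edges) {S : Finset ι} {z : V}
    (hS : ∀ i ∈ S, s i ≠ t i ∧ (z = s i ∨ z = t i)) (hcard : Fintype.card V - 2 ≤ #S)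
    {j : ι} (hj : (P j).IsPath) (hzs : z ≠ s j) (hzt : z ≠ t j) : z ∉ (P j).support := by
  classical
  intro hz
  have hjS : j ∉ S := fun hjS => by rcases (hS j hjS).2 with h | h <;> contradiction
  have hlower : #S + 2 ≤ ∑ i ∈ insert j S, #((P i).edgesAt z) := by
    rw [sum_insert hjS, add_comm, card_eq_sum_ones]
    gcongr with i hi
    · exact Walk.one_lt_card_edgesAt hj hz hzs hzt
    · obtain ⟨hst, rfl | rfl⟩ := hS i hi
      · exact one_le_card.2 ((P i).edgesAt_start_nonempty hst)
      · exact one_le_card.2 ((P i).edgesAt_end_nonempty hst)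
  have hupper := sum_card_edgesAt_le_card P hdisj (insert j S) z (W := univ.erase z) (by simp)
  rw [card_erase_of_mem (mem_univ z), card_univ] at hupper
  omega

theorem card_lt_card_sub_two_of_bundle
    (hdisj : Pairwise fun i j => (P i).edges.Disjoint (P j).edges) {u v x y : V}
    (hdist : [u, v, x, y].Nodup)
    {A B : Finset ι} (hA : ∀ i ∈ A, s i = u ∧ t i = v) (hB : ∀ i ∈ B, s i = x ∧ t i = y)
    (hpath : ∀ i ∈ A, (P i).IsPath) (hBcard : Fintype.card V - 2 ≤ #B) :
    #A < Fintype.card V - 2 := by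
  simp only [List.nodup_cons, List.mem_cons, List.not_mem_nil, or_false, not_or,
    List.nodup_nil, not_false_eq_true, and_true] at hdist
  obtain ⟨⟨huv, hux, huy⟩, ⟨hvx, hvy⟩, hxy⟩ := hdist
  have hB' : ∀ i ∈ B, s i ≠ t i := fun i hi => (hB i hi).1 ▸ (hB i hi).2 ▸ hxy
  have havoid : ∀ i ∈ A, ∀ w ∈ (P i).support, w ≠ u → w ∈ ({u, x, y} : Finset V)ᶜ := by
    intro i hi w hw hwu
    obtain ⟨hsi, hti⟩ := hA i hi
    have hx := notMem_support_of_card_sub_two_le P hdisj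
      (fun i hi => ⟨hB' i hi, .inl (hB i hi).1.symm⟩) hBcard (hpath i hi)
      (hsi ▸ Ne.symm hux) (hti ▸ Ne.symm hvx)
    have hy := notMem_support_of_card_sub_two_le P hdisj
      (fun i hi => ⟨hB' i hi, .inr (hB i hi).2.symm⟩) hBcard (hpath i hi)
      (hsi ▸ Ne.symm huy) (hti ▸ Ne.symm hvy)
    simp only [mem_compl, mem_insert, mem_singleton, not_or]
    exact ⟨hwu, fun h => hx (h ▸ hw), fun h => hy (h ▸ hw)⟩
  have hlower : #A ≤ ∑ i ∈ A, #((P i).edgesAt u) := by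
    rw [card_eq_sum_ones]
    gcongr with i hi
    obtain ⟨hsi, hti⟩ := hA i hi
    exact one_le_card.2 (hsi ▸ (P i).edgesAt_start_nonempty (hsi ▸ hti ▸ huv))
  have hupper := sum_card_edgesAt_le_card P hdisj A u havoid
  have hthree : #({u, x, y} : Finset V) = 3 := by
    rw [card_insert_of_notMem (by simp [hux, huy]), card_pair hxy]
  have := card_le_univ ({u, x, y} : Finset V)
  rw [card_compl, hthree] at hupper
  omega

end SimpleGraph

theorem two_bundles_not_resolvable_general {V : Type*} [Fintype V]
    (u v x y : V) (hdist : [u, v, x, y].Nodup) :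
    ¬ Resolvable (List.replicate (Fintype.card V - 2) (u, v) ++
        List.replicate (Fintype.card V - 2) (x, y)) := by
  classical
  generalize hD : List.replicate (Fintype.card V - 2) (u, v) ++
    List.replicate (Fintype.card V - 2) (x, y) = D
  have hne : (x, y) ≠ (u, v) := by
    simp only [List.nodup_cons, List.mem_cons, List.not_mem_nil] at hdist
    simp only [ne_eq, Prod.mk.injEq]
    tauto
  have huv : #{i | D.get i = (u, v)} = Fintype.card V - 2 := by
    rw [List.card_filter_get_eq_count, ← hD]
    simp [List.count_replicate, hne]
  have hxy : #{i | D.get i = (x, y)} = Fintype.card V - 2 := by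
    rw [List.card_filter_get_eq_count, ← hD]
    simp [List.count_replicate, hne.symm]
  have hget {p : V × V} {i : Fin D.length} (hi : i ∈ ({i | D.get i = p} : Finset _)) :
      (D.get i).1 = p.1 ∧ (D.get i).2 = p.2 := by
    rw [(mem_filter.1 hi).2]
    exact ⟨rfl, rfl⟩
  rintro ⟨P, hpath, hdisj⟩
  have := SimpleGraph.card_lt_card_sub_two_of_bundle P (fun i j hij e => hdisj i j hij e) hdist
    (fun _ => hget (p := (u, v))) (fun _ => hget (p := (x, y))) (fun i _ => hpath i) hxy.ge
  exact this.ne huv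

/-- For `n ≥ 4`, the demand multigraph on the `n` vertices of `Kₙ` consisting of two
disjoint bundles of `n - 2` parallel edges (between `u, v` and between `x, y`, all four
distinct) cannot be resolved by pairwise edge-disjoint paths in `Kₙ`. -/
theorem two_bundles_not_resolvable {V : Type*} [Fintype V] [DecidableEq V]
    (hn : 4 ≤ Fintype.card V)
    (u v x y : V) (hdist : [u, v, x, y].Nodup) :
    ¬ Resolvable (List.replicate (Fintype.card V - 2) (u, v) ++
        List.replicate (Fintype.card V - 2) (x, y)) :=
  two_bundles_not_resolvable_general u v x y hdist
end

section
/- Let D be a multigraph on vertex set V, v ∈ V a vertex with d(v) ≤ |V| - 1, and suppose D is transformed by, for each edge of v beyond one per neighbor, lifting that edge to a distinct non-neighbor of v (replacing edge vu by the path v–w–u through a non-neighbor w, each non-neighbor used at most once). Then in the resulting multigraph D', v has no multiple edges (d_{D'}(v) = γ_{D'}(v)), d_{D'}(v) = d_D(v), and any resolution of D' in Kₙ yields a resolution of D. -/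
/-- The number `γ(v)` of distinct neighbors of `v`. -/
def gamma {V : Type*} [Fintype V] [DecidableEq V] (D : List (V × V)) (v : V) : ℕ :=
  (Finset.univ.filter (fun u => (v, u) ∈ D ∨ (u, v) ∈ D)).card

/-- A single lifting step at `v`: an edge `p` of `D` incident to `v` is replaced by the
path through a vertex `w` that is a non-neighbor of `v` (and not an endpoint of `p`). -/
def LiftAt {V : Type*} [DecidableEq V] (v : V) (D D' : List (V × V)) : Prop :=
  ∃ p ∈ D, (p.1 = v ∨ p.2 = v) ∧ ∃ w : V,
    w ≠ p.1 ∧ w ≠ p.2 ∧ ¬((v, w) ∈ D ∨ (w, v) ∈ D) ∧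
    D' = (p.1, w) :: (w, p.2) :: D.erase p

open SimpleGraph

theorem List.Perm.exists_injective_get_eq {α : Type*} {l l' : List α} (h : l.Perm l') :
    ∃ σ : Fin l.length → Fin l'.length, Function.Injective σ ∧ ∀ i, l'.get (σ i) = l.get i := by
  induction h with
  | nil => exact ⟨id, Function.injective_id, fun _ => rfl⟩
  | cons x _ ih =>
    obtain ⟨σ, hσ, hget⟩ := ih
    refine ⟨Fin.cons 0 (Fin.succ ∘ σ),
      Fin.cons_injective_iff.2 ⟨?_, (Fin.succ_injective _).comp hσ⟩, fun i => ?_⟩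
    · simp [Fin.succ_ne_zero]
    · cases i using Fin.cases
      · rfl
      · simpa using hget _
  | swap x y l =>
    refine ⟨Equiv.swap 0 1, (Equiv.swap 0 1).injective, fun i => ?_⟩
    rcases i with ⟨_ | _ | i, hi⟩
    · rfl
    · rfl
    · rw [Equiv.swap_apply_of_ne_of_ne] <;> simp [Fin.ext_iff]
  | trans _ _ ih₁ ih₂ =>
    obtain ⟨σ₁, hσ₁, hget₁⟩ := ih₁
    obtain ⟨σ₂, hσ₂, hget₂⟩ := ih₂
    exact ⟨σ₂ ∘ σ₁, hσ₂.comp hσ₁, fun i => (hget₂ (σ₁ i)).trans (hget₁ i)⟩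

theorem List.exists_mem_erase_eq_of_not_nodup_map {α β : Type*} [BEq α] [LawfulBEq α]
    {f : α → β} {l : List α} (h : ¬(l.map f).Nodup) : ∃ a ∈ l, ∃ b ∈ l.erase a, f a = f b := by
  induction l with
  | nil => simp at h
  | cons x t ih =>
    rw [List.map_cons, List.nodup_cons, not_and_or, not_not, List.mem_map] at h
    rcases h with ⟨b, hb, hfb⟩ | h
    · exact ⟨x, List.mem_cons_self, b, by simpa using hb, hfb.symm⟩
    · obtain ⟨a, ha, b, hb, hab⟩ := ih h
      refine ⟨a, List.mem_cons_of_mem x ha, b, ?_, hab⟩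
      by_cases hxa : x = a
      · simpa [hxa] using List.mem_of_mem_erase hb
      · simpa [List.erase_cons, beq_iff_eq, hxa] using Or.inr hb

section Resolvable

variable {V : Type*} {D D' : List (V × V)}

theorem Resolvable.of_injective_get_eq (σ : Fin D.length → Fin D'.length)
    (hσ : Function.Injective σ) (hget : ∀ i, D'.get (σ i) = D.get i) :
    Resolvable D' → Resolvable D := by
  rintro ⟨P, hpath, hdisj⟩
  refine ⟨fun i => (P (σ i)).copy (congrArg Prod.fst (hget i)) (congrArg Prod.snd (hget i)),
    fun i => by simpa using hpath (σ i), fun i j hij e hei hej => ?_⟩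
  rw [Walk.edges_copy] at hei hej
  exact hdisj _ _ (hσ.ne hij) e hei hej

theorem Resolvable.of_perm (h : D.Perm D') : Resolvable D' → Resolvable D :=
  let ⟨σ, hσ, hget⟩ := h.exists_injective_get_eq
  Resolvable.of_injective_get_eq σ hσ hget

theorem Resolvable.of_cons_cons [DecidableEq V] {a b w : V} {E : List (V × V)} :
    Resolvable ((a, w) :: (w, b) :: E) → Resolvable ((a, b) :: E) := by
  rintro ⟨P, hpath, hdisj⟩
  let Q : (i : Fin ((a, b) :: E).length) → (⊤ : SimpleGraph V).Walk
      (((a, b) :: E).get i).1 (((a, b) :: E).get i).2 :=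
    Fin.cons ((P 0).append (P 1)).bypass (fun j => P j.succ.succ)
  -- sends the indices of `(a, w)` and `(w, b)` to that of `(a, b)`, and shifts the others
  let merge : Fin (E.length + 2) → Fin (E.length + 1) := Fin.cases 0 id
  have hcover : ∀ i, ∀ e ∈ (Q i).edges, ∃ k, merge k = i ∧ e ∈ (P k).edges := by
    intro i e he
    cases i using Fin.cases with
    | zero =>
      have := Walk.edges_append (P 0) (P 1) ▸ Walk.edges_bypass_subset_edges _ he
      exact (List.mem_append.1 this).elim (⟨0, rfl, ·⟩) (⟨1, rfl, ·⟩)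
    | succ j => exact ⟨j.succ.succ, rfl, he⟩
  refine ⟨Q, fun i => ?_, fun i j hij e hei hej => ?_⟩
  · cases i using Fin.cases with
    | zero => exact Walk.bypass_isPath _
    | succ j => exact hpath _
  · obtain ⟨k, rfl, hk⟩ := hcover i e hei
    obtain ⟨k', rfl, hk'⟩ := hcover j e hej
    exact hdisj k k' (fun h => hij (congrArg merge h)) e hk hk'

end Resolvable

section Degree

variable {V : Type*} [DecidableEq V]

def otherEnd (v : V) (q : V × V) : V := if q.1 = v then q.2 else q.1

def neighbors [Fintype V] (D : List (V × V)) (v : V) : Finset V :=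
  Finset.univ.filter fun u => (v, u) ∈ D ∨ (u, v) ∈ D

theorem gamma_eq_card_neighbors [Fintype V] (D : List (V × V)) (v : V) :
    gamma D v = (neighbors D v).card := rfl

@[simp]
theorem mem_neighbors [Fintype V] {D : List (V × V)} {v u : V} :
    u ∈ neighbors D v ↔ (v, u) ∈ D ∨ (u, v) ∈ D := by
  simp [neighbors]

def neighborList (D : List (V × V)) (v : V) : List V :=
  (D.filter fun p => p.1 = v ∨ p.2 = v).map (otherEnd v)

theorem length_neighborList (D : List (V × V)) (v : V) :
    (neighborList D v).length = mdeg D v := by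
  simp [neighborList, mdeg]

variable [Fintype V] {D : List (V × V)} {v : V}

theorem otherEnd_mem_neighbors {q : V × V} (hq : q ∈ D) (hqv : q.1 = v ∨ q.2 = v) :
    otherEnd v q ∈ neighbors D v := by
  unfold otherEnd
  split_ifs with h
  · exact mem_neighbors.2 (Or.inl (h ▸ hq))
  · exact mem_neighbors.2 (Or.inr (hqv.resolve_left h ▸ hq))

theorem neighborList_toFinset_subset : (neighborList D v).toFinset ⊆ neighbors D v := by
  intro u hu
  obtain ⟨q, hq, rfl⟩ := List.mem_map.1 (List.mem_toFinset.1 hu)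
  rw [List.mem_filter, decide_eq_true_iff] at hq
  exact otherEnd_mem_neighbors hq.1 hq.2

theorem neighbors_subset_neighborList_toFinset (hloop : ∀ p ∈ D, p.1 ≠ p.2) :
    neighbors D v ⊆ (neighborList D v).toFinset := by
  intro u hu
  simp only [neighborList, List.mem_toFinset, List.mem_map, List.mem_filter, decide_eq_true_iff]
  rcases mem_neighbors.1 hu with h | h
  · exact ⟨(v, u), ⟨h, .inl rfl⟩, by simp [otherEnd]⟩
  · exact ⟨(u, v), ⟨h, .inr rfl⟩, by simp [otherEnd, hloop _ h]⟩

theorem gamma_le_mdeg (hloop : ∀ p ∈ D, p.1 ≠ p.2) : gamma D v ≤ mdeg D v :=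
  calc gamma D v ≤ (neighborList D v).toFinset.card :=
        Finset.card_le_card (neighbors_subset_neighborList_toFinset hloop)
    _ ≤ (neighborList D v).length := List.toFinset_card_le _
    _ = mdeg D v := length_neighborList D v

theorem exists_parallel_edges_of_gamma_lt_mdeg (h : gamma D v < mdeg D v) :
    ∃ p ∈ D, (p.1 = v ∨ p.2 = v) ∧
      ∃ q ∈ D.erase p, (q.1 = v ∨ q.2 = v) ∧ otherEnd v p = otherEnd v q := by
  have hdup : ¬(neighborList D v).Nodup := fun hnd => by
    have := Finset.card_le_card (neighborList_toFinset_subset (D := D) (v := v))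
    rw [List.toFinset_card_of_nodup hnd, length_neighborList] at this
    exact absurd h (not_lt.2 this)
  obtain ⟨p, hp, q, hq, hpq⟩ := List.exists_mem_erase_eq_of_not_nodup_map hdup
  rw [List.mem_filter, decide_eq_true_iff] at hp
  have hqv : q.1 = v ∨ q.2 = v := by simpa using (List.mem_filter.1 (List.mem_of_mem_erase hq)).2
  exact ⟨p, hp.1, hp.2, q, (List.filter_sublist.erase p).subset hq, hqv, hpq⟩

end Degree

section Lift

variable {V : Type*} [DecidableEq V] {v : V} {D D₁ D' : List (V × V)}

theorem neighbors_lift [Fintype V] {p : V × V} {w : V} (E : List (V × V)) (hw : w ≠ v)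
    (hpv : p.1 = v ∨ p.2 = v) :
    neighbors ((p.1, w) :: (w, p.2) :: E) v = insert w (neighbors E v) := by
  ext x
  simp only [mem_neighbors, Finset.mem_insert, List.mem_cons, Prod.ext_iff]
  grind

theorem neighbors_erase_of_otherEnd_mem [Fintype V] {p : V × V} (hp : p ∈ D) (hp12 : p.1 ≠ p.2)
    (h : otherEnd v p ∈ neighbors (D.erase p) v) : neighbors (D.erase p) v = neighbors D v := by
  refine Finset.Subset.antisymm
    (fun x hx => (mem_neighbors.1 hx).imp List.mem_of_mem_erase List.mem_of_mem_erase |>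
      mem_neighbors.2) (fun x hx => ?_)
  by_cases hxp : x = otherEnd v p
  · exact hxp ▸ h
  · have hvx : (v, x) ≠ p := by rintro rfl; simp [otherEnd] at hxp
    have hxv : (x, v) ≠ p := by rintro rfl; simp [otherEnd, hp12] at hxp
    exact (mem_neighbors.1 hx).imp (List.mem_erase_of_ne hvx).2 (List.mem_erase_of_ne hxv).2 |>
      mem_neighbors.2

theorem ends_mem_insert_neighbors [Fintype V] {p : V × V} (hp : p ∈ D)
    (hpv : p.1 = v ∨ p.2 = v) :
    p.1 ∈ insert v (neighbors D v) ∧ p.2 ∈ insert v (neighbors D v) := by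
  rcases hpv with h | h
  · exact ⟨h ▸ Finset.mem_insert_self _ _, Finset.mem_insert_of_mem (by simp [← h, hp])⟩
  · exact ⟨Finset.mem_insert_of_mem (by simp [← h, hp]), h ▸ Finset.mem_insert_self _ _⟩

theorem LiftAt.loopless (h : LiftAt v D D₁) (hloop : ∀ p ∈ D, p.1 ≠ p.2) :
    ∀ p ∈ D₁, p.1 ≠ p.2 := by
  obtain ⟨p, -, -, w, hw1, hw2, -, rfl⟩ := h
  simp only [List.mem_cons]
  rintro q (rfl | rfl | hq)
  · exact hw1.symm
  · exact hw2
  · exact hloop q (List.mem_of_mem_erase hq)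

theorem LiftAt.mdeg_eq (h : LiftAt v D D₁) (hloop : ∀ p ∈ D, p.1 ≠ p.2) :
    mdeg D₁ v = mdeg D v := by
  obtain ⟨p, hp, hpv, w, hw1, hw2, -, rfl⟩ := h
  have hwv : w ≠ v := by rintro rfl; tauto
  have hperm := (List.perm_cons_erase hp).countP_eq fun q => decide (q.1 = v ∨ q.2 = v)
  have hp12 := hloop p hp
  simp only [mdeg, ← List.countP_eq_length_filter, List.countP_cons] at hperm ⊢
  grind

theorem LiftAt.resolvable (h : LiftAt v D D₁) : Resolvable D₁ → Resolvable D := by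
  obtain ⟨p, hp, -, w, -, -, -, rfl⟩ := h
  exact fun hr => Resolvable.of_perm (List.perm_cons_erase hp) (Resolvable.of_cons_cons hr)

theorem Resolvable.of_reflTransGen_liftAt (h : Relation.ReflTransGen (LiftAt v) D D') :
    Resolvable D' → Resolvable D := by
  induction h with
  | refl => exact id
  | tail _ hstep ih => exact ih ∘ hstep.resolvable

end Lift

section Resolution

variable {V : Type*} [Fintype V] [DecidableEq V] {v : V} {D : List (V × V)}

theorem exists_notMem_insert_neighbors (h : gamma D v + 1 < Fintype.card V) :
    ∃ w, w ∉ insert v (neighbors D v) := by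
  obtain ⟨w, -, hw⟩ := Finset.exists_mem_notMem_of_card_lt_card
    ((Finset.card_insert_le v (neighbors D v)).trans_lt (h.trans_eq Finset.card_univ.symm))
  exact ⟨w, hw⟩

/-- The lifted edge is one of two parallel edges `vu`, so `u` stays a neighbour of `v` while
`w` becomes a new one. -/
theorem exists_liftAt_gamma_succ (hloop : ∀ p ∈ D, p.1 ≠ p.2) (hlt : gamma D v < mdeg D v)
    (hdeg : mdeg D v ≤ Fintype.card V - 1) :
    ∃ D₁, LiftAt v D D₁ ∧ gamma D₁ v = gamma D v + 1 := by
  obtain ⟨p, hp, hpv, q, hq, hqv, hpq⟩ := exists_parallel_edges_of_gamma_lt_mdeg hlt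
  have hcard : 0 < Fintype.card V := Fintype.card_pos_iff.2 ⟨v⟩
  obtain ⟨w, hw⟩ := exists_notMem_insert_neighbors (D := D) (v := v) (by omega)
  have hwv : w ≠ v := fun h => hw (h ▸ Finset.mem_insert_self _ _)
  have hwN : w ∉ neighbors D v := fun h => hw (Finset.mem_insert_of_mem h)
  have hends := ends_mem_insert_neighbors hp hpv
  refine ⟨_, ⟨p, hp, hpv, w, fun h => hw (h ▸ hends.1), fun h => hw (h ▸ hends.2),
    mt mem_neighbors.2 hwN, rfl⟩, ?_⟩
  have hsame := neighbors_erase_of_otherEnd_mem hp (hloop p hp)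
    (hpq ▸ otherEnd_mem_neighbors hq hqv)
  rw [gamma_eq_card_neighbors, neighbors_lift _ hwv hpv, hsame,
    Finset.card_insert_of_notMem hwN, gamma_eq_card_neighbors]

theorem exists_reflTransGen_liftAt_mdeg_eq_gamma (D : List (V × V)) (hloop : ∀ p ∈ D, p.1 ≠ p.2)
    (hdeg : mdeg D v ≤ Fintype.card V - 1) :
    ∃ D', Relation.ReflTransGen (LiftAt v) D D' ∧ mdeg D' v = mdeg D v ∧
      mdeg D' v = gamma D' v := by
  by_cases hlt : gamma D v < mdeg D v
  · obtain ⟨D₁, hlift, hgamma⟩ := exists_liftAt_gamma_succ hloop hlt hdeg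
    have hmdeg := hlift.mdeg_eq hloop
    obtain ⟨D', hchain, hmdeg', hD'⟩ :=
      exists_reflTransGen_liftAt_mdeg_eq_gamma D₁ (hlift.loopless hloop) (hmdeg ▸ hdeg)
    exact ⟨D', .head hlift hchain, hmdeg'.trans hmdeg, hD'⟩
  · exact ⟨D, .refl, rfl, le_antisymm (not_lt.1 hlt) (gamma_le_mdeg hloop)⟩
termination_by mdeg D v - gamma D v
decreasing_by omega

end Resolution

/-- **Resolution of the multiplicities of `v`.** If `d(v) ≤ n - 1`, then by repeatedly
lifting edges of `v` to non-neighbors of `v`, `D` can be transformed into a demand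
multigraph `D'` in which `v` has the same degree but no multiple edges
(`d_{D'}(v) = γ_{D'}(v)`), and any resolution of `D'` yields a resolution of `D`. -/
theorem resolve_multiplicities_at_vertex {V : Type*} [Fintype V] [DecidableEq V]
    (D : List (V × V)) (hloop : ∀ p ∈ D, p.1 ≠ p.2) (v : V)
    (hdeg : mdeg D v ≤ Fintype.card V - 1) :
    ∃ D' : List (V × V),
      Relation.ReflTransGen (LiftAt v) D D' ∧
      mdeg D' v = mdeg D v ∧
      mdeg D' v = gamma D' v ∧
      (Resolvable D' → Resolvable D) := by
  obtain ⟨D', hchain, hmdeg, hsimple⟩ := exists_reflTransGen_liftAt_mdeg_eq_gamma D hloop hdeg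
  exact ⟨D', hchain, hmdeg, hsimple, Resolvable.of_reflTransGen_liftAt hchain⟩
end

section
/- Let D be a demand multigraph on n vertices (24 ≤ n) with Δ(D) ≤ 2⌊n/6⌋ - 4 and D not (2⌊n/6⌋-4)-regular. Then by repeatedly lifting edges, D can be transformed into a (2⌊n/6⌋-4)-regular demand multigraph D' on the same vertex set such that any resolution of D' in Kₙ yields a resolution of D, possibly after adding parallel edges to D. -/
/-- A single lifting step: an edge `p` of `D` is replaced by the path through a third
vertex `w`. -/
def Lift {V : Type*} [DecidableEq V] (D D' : List (V × V)) : Prop :=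
  ∃ p ∈ D, ∃ w : V, w ≠ p.1 ∧ w ≠ p.2 ∧
    D' = (p.1, w) :: (w, p.2) :: D.erase p

section

variable {V : Type*}

def Loopless (L : List (V × V)) : Prop := ∀ p ∈ L, p.1 ≠ p.2

theorem Loopless.append_edge {L : List (V × V)} (hL : Loopless L) {u w : V} (huw : u ≠ w) :
    Loopless (L ++ [(u, w)]) := by
  intro q hq
  rcases List.mem_append.mp hq with hq | hq
  · exact hL q hq
  · rw [List.mem_singleton.mp hq]
    exact huw

theorem Loopless.lift [DecidableEq V] {L : List (V × V)} (hL : Loopless L) {p : V × V} {w : V}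
    (hw₁ : w ≠ p.1) (hw₂ : w ≠ p.2) : Loopless ((p.1, w) :: (w, p.2) :: L.erase p) := by
  simpa [Loopless, hw₁.symm, hw₂] using fun q hq => hL q (List.erase_subset hq)

section Degree

variable [DecidableEq V]

@[simp]
theorem mdeg_nil (v : V) : mdeg [] v = 0 := rfl

theorem mdeg_cons_s14 (q : V × V) (L : List (V × V)) (v : V) :
    mdeg (q :: L) v = mdeg L v + if q.1 = v ∨ q.2 = v then 1 else 0 := by
  by_cases h : q.1 = v ∨ q.2 = v <;> simp [mdeg, h]

theorem mdeg_append (L M : List (V × V)) (v : V) : mdeg (L ++ M) v = mdeg L v + mdeg M v := by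
  simp [mdeg, List.filter_append]

theorem mdeg_perm {L M : List (V × V)} (h : L.Perm M) (v : V) : mdeg L v = mdeg M v :=
  (h.filter _).length_eq

theorem exists_mem_not_incident {L : List (V × V)} {v : V} (h : mdeg L v < L.length) :
    ∃ p ∈ L, ¬(p.1 = v ∨ p.2 = v) := by
  by_contra! hall
  have : L.filter (fun p => p.1 = v ∨ p.2 = v) = L :=
    List.filter_eq_self.mpr (by simpa using hall)
  rw [mdeg, this] at h
  exact h.false

theorem mdeg_lift {L : List (V × V)} {p : V × V} (hpL : p ∈ L) (hp : p.1 ≠ p.2) {w : V}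
    (hw₁ : w ≠ p.1) (hw₂ : w ≠ p.2) (u : V) :
    mdeg ((p.1, w) :: (w, p.2) :: L.erase p) u = mdeg L u + if u = w then 2 else 0 := by
  rw [mdeg_perm (List.perm_cons_erase hpL) u]
  simp only [mdeg_cons_s14]
  by_cases hu : u = w
  · subst hu; simp [hw₁.symm, hw₂.symm]
  · by_cases h₁ : p.1 = u <;> by_cases h₂ : p.2 = u <;> simp_all [eq_comm]

variable [Fintype V]

theorem sum_mdeg_s14 {L : List (V × V)} (hL : Loopless L) : ∑ v, mdeg L v = 2 * L.length := by
  induction L with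
  | nil => simp [mdeg]
  | cons q L ih =>
    have hq : q.1 ≠ q.2 := hL q List.mem_cons_self
    have hends : (Finset.univ.filter fun v => q.1 = v ∨ q.2 = v) = {q.1, q.2} := by
      ext; simp [eq_comm]
    simp only [mdeg_cons_s14, Finset.sum_add_distrib, Finset.sum_boole, hends,
      Finset.card_pair hq, Nat.cast_ofNat, ih fun p hp => hL p (List.mem_cons_of_mem q hp),
      List.length_cons]
    ring

theorem two_mul_length_eq {L : List (V × V)} (hL : Loopless L) {k : ℕ} {v : V}
    (hreg : ∀ u ≠ v, mdeg L u = k) : 2 * L.length = mdeg L v + (Fintype.card V - 1) * k := by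
  rw [← sum_mdeg_s14 hL, ← Finset.add_sum_erase _ _ (Finset.mem_univ v),
    Finset.sum_congr rfl fun u hu => hreg u (Finset.ne_of_mem_erase hu)]
  simp [Finset.card_erase_of_mem]

end Degree

namespace Resolvable

theorem subperm {L M : List (V × V)} (h : M.Subperm L) : Resolvable L → Resolvable M := by
  classical
  rintro ⟨P, hpath, hdisj⟩
  have hget (i : Fin M.length) : L.get (h.idxInj i) = M.get i := h.getElem_idxInj_eq_getElem
  refine ⟨fun i =>
      (P (h.idxInj i)).copy (congrArg Prod.fst (hget i)) (congrArg Prod.snd (hget i)),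
    fun i => (SimpleGraph.Walk.isPath_copy _ _ _).mpr (hpath _), fun i j hij e he => ?_⟩
  rw [SimpleGraph.Walk.edges_copy] at he ⊢
  exact hdisj _ _ (h.idxInj_injective.ne hij) e he

variable [DecidableEq V]

theorem of_walks {L : List (V × V)}
    (Q : (i : Fin L.length) → (⊤ : SimpleGraph V).Walk (L.get i).1 (L.get i).2)
    (hQ : ∀ i j, i ≠ j → ∀ e ∈ (Q i).edges, e ∉ (Q j).edges) : Resolvable L :=
  ⟨fun i => (Q i).bypass, fun i => (Q i).bypass_isPath, fun i j hij e hi hj =>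
    hQ i j hij e ((Q i).edges_bypass_subset_edges hi) ((Q j).edges_bypass_subset_edges hj)⟩

theorem of_cons_cons_s14 {a w b : V} {M : List (V × V)} :
    Resolvable ((a, w) :: (w, b) :: M) → Resolvable ((a, b) :: M) := by
  rintro ⟨P, -, hdisj⟩
  let P₀ := (P 0).append (P 1)
  have hP₀ (j : Fin M.length) : ∀ e ∈ P₀.edges, e ∉ (P j.succ.succ).edges := by
    intro e he
    rcases List.mem_append.mp (SimpleGraph.Walk.edges_append _ _ ▸ he) with h | h
    exacts [hdisj 0 _ (Fin.succ_ne_zero _).symm e h, hdisj 1 _ (by simp [Fin.ext_iff]) e h]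
  refine of_walks (fun i => Fin.cases P₀ (fun j => P j.succ.succ) i) fun i j hij e => ?_
  cases i using Fin.cases <;> cases j using Fin.cases
  · exact absurd rfl hij
  · exact hP₀ _ e
  · exact fun hi hj => hP₀ _ e hj hi
  · exact hdisj _ _ (by simpa using hij) e

theorem of_lift {L L' : List (V × V)} (h : Lift L L') : Resolvable L' → Resolvable L := by
  obtain ⟨p, hp, w, -, -, rfl⟩ := h
  exact fun hL' => (of_cons_cons_s14 hL').subperm (List.perm_cons_erase hp).subperm

theorem of_reflTransGen_lift {L L' : List (V × V)} (h : Relation.ReflTransGen Lift L L') :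
    Resolvable L' → Resolvable L := by
  induction h with
  | refl => exact id
  | tail _ hlift ih => exact ih ∘ of_lift hlift

end Resolvable

section Regularization

variable [DecidableEq V] [Fintype V] {k : ℕ}

theorem exists_append_subsingleton_deficient (L : List (V × V)) (hL : Loopless L)
    (hle : ∀ v, mdeg L v ≤ k) :
    ∃ F, Loopless (L ++ F) ∧ (∀ v, mdeg (L ++ F) v ≤ k) ∧
      {v | mdeg (L ++ F) v < k}.Subsingleton := by
  by_cases hsub : {v | mdeg L v < k}.Subsingleton
  · exact ⟨[], by simpa using hL, by simpa using hle, by simpa using hsub⟩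
  obtain ⟨u, hu, w, hw, huw⟩ := Set.not_subsingleton_iff.mp hsub
  have hdeg (v : V) : mdeg (L ++ [(u, w)]) v = mdeg L v + if u = v ∨ w = v then 1 else 0 := by
    simp only [mdeg_append, mdeg_cons_s14, mdeg_nil, zero_add]
  have hle' (v : V) : mdeg (L ++ [(u, w)]) v ≤ k := by
    rw [hdeg]
    rcases eq_or_ne u v with rfl | h₁
    · simpa using hu
    rcases eq_or_ne w v with rfl | h₂
    · simpa using hw
    simpa [h₁, h₂] using hle v
  obtain ⟨F, hF⟩ :=
    exists_append_subsingleton_deficient (L ++ [(u, w)]) (hL.append_edge huw) hle'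
  exact ⟨(u, w) :: F, by simpa using hF⟩
termination_by ∑ v, (k - mdeg L v)
decreasing_by
  refine Finset.sum_lt_sum (fun v _ => by rw [hdeg]; omega) ⟨u, Finset.mem_univ u, ?_⟩
  simp only [hdeg, true_or, if_true]
  exact Nat.sub_succ_lt_self _ _ hu

theorem exists_reflTransGen_lift_regular_of_forall_ne (hk : Even k) (hV : 2 ≤ Fintype.card V)
    (v : V) (L : List (V × V)) (hL : Loopless L) (hv : mdeg L v ≤ k)
    (hreg : ∀ u ≠ v, mdeg L u = k) :
    ∃ L', Relation.ReflTransGen Lift L L' ∧ ∀ u, mdeg L' u = k := by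
  by_cases hvk : mdeg L v = k
  · exact ⟨L, .refl, fun u => if h : u = v then h ▸ hvk else hreg u h⟩
  have hlen := two_mul_length_eq hL hreg
  have hk_le : k ≤ (Fintype.card V - 1) * k := Nat.le_mul_of_pos_left k (by omega)
  have hv_even : Even (mdeg L v) :=
    (Nat.even_add.mp (hlen ▸ even_two_mul L.length)).mpr (hk.mul_left _)
  obtain ⟨p, hpL, hpv⟩ := exists_mem_not_incident (L := L) (v := v) (by omega)
  push Not at hpv
  have hdeg := mdeg_lift hpL (hL p hpL) hpv.1.symm hpv.2.symm
  obtain ⟨L', hlift, hL'⟩ := exists_reflTransGen_lift_regular_of_forall_ne hk hV v _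
    (hL.lift hpv.1.symm hpv.2.symm)
    (by obtain ⟨a, ha⟩ := hk; obtain ⟨b, hb⟩ := hv_even; rw [hdeg, if_pos rfl]; omega)
    (fun u hu => by rw [hdeg, if_neg hu, add_zero, hreg u hu])
  exact ⟨L', .head ⟨p, hpL, v, hpv.1.symm, hpv.2.symm, rfl⟩ hlift, hL'⟩
termination_by k - mdeg L v
decreasing_by rw [hdeg, if_pos rfl]; omega

theorem exists_reflTransGen_lift_regular (hk : Even k) (hV : 2 ≤ Fintype.card V)
    {L : List (V × V)} (hL : Loopless L) (hle : ∀ v, mdeg L v ≤ k)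
    (hsub : {v | mdeg L v < k}.Subsingleton) :
    ∃ L', Relation.ReflTransGen Lift L L' ∧ ∀ u, mdeg L' u = k := by
  by_cases hreg : ∀ v, mdeg L v = k
  · exact ⟨L, .refl, hreg⟩
  push Not at hreg
  obtain ⟨v, hv⟩ := hreg
  have hvk : mdeg L v < k := (hle v).lt_of_ne hv
  exact exists_reflTransGen_lift_regular_of_forall_ne hk hV v L hL (hle v)
    fun u hu => (hle u).eq_of_not_lt fun huk => hu (hsub huk hvk)

end Regularization

end

theorem regularize_demand_graph_general {V : Type*} [Fintype V] [DecidableEq V]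
    (hn : 24 ≤ Fintype.card V)
    (D : List (V × V)) (hloop : ∀ p ∈ D, p.1 ≠ p.2)
    (hΔ : ∀ v, mdeg D v ≤ 2 * (Fintype.card V / 6) - 4) :
    ∃ Dplus D' : List (V × V),
      (∀ p ∈ Dplus, p.1 ≠ p.2) ∧
      ((↑(D.map (fun p => s(p.1, p.2))) : Multiset (Sym2 V)) ≤
        ↑(Dplus.map (fun p => s(p.1, p.2)))) ∧
      Relation.ReflTransGen Lift Dplus D' ∧
      (∀ v, mdeg D' v = 2 * (Fintype.card V / 6) - 4) ∧
      (Resolvable D' → Resolvable D) := by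
  have hk : Even (2 * (Fintype.card V / 6) - 4) := ⟨Fintype.card V / 6 - 2, by omega⟩
  obtain ⟨F, hloopF, hleF, hsub⟩ := exists_append_subsingleton_deficient D hloop hΔ
  obtain ⟨D', hlift, hreg⟩ := exists_reflTransGen_lift_regular hk (by omega) hloopF hleF hsub
  have hDF : D.Sublist (D ++ F) := List.sublist_append_left D F
  exact ⟨D ++ F, D', hloopF, Multiset.coe_le.mpr (hDF.map _).subperm, hlift, hreg,
    fun h => (Resolvable.of_reflTransGen_lift hlift h).subperm hDF.subperm⟩

/-- A non-regular demand multigraph `D` on `n ≥ 24` vertices with `Δ(D) ≤ 2⌊n/6⌋ - 4`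
can be transformed — possibly after first adding parallel edges (obtaining `Dplus ⊇ D`)
and then repeatedly lifting edges — into a `(2⌊n/6⌋ - 4)`-regular demand multigraph
`D'` on the same vertex set, such that any resolution of `D'` in `Kₙ` yields a
resolution of `D`. -/
theorem regularize_demand_graph {V : Type*} [Fintype V] [DecidableEq V]
    (hn : 24 ≤ Fintype.card V)
    (D : List (V × V)) (hloop : ∀ p ∈ D, p.1 ≠ p.2)
    (hΔ : ∀ v, mdeg D v ≤ 2 * (Fintype.card V / 6) - 4)
    (hirr : ¬ ∀ v, mdeg D v = 2 * (Fintype.card V / 6) - 4) :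
    ∃ Dplus D' : List (V × V),
      (∀ p ∈ Dplus, p.1 ≠ p.2) ∧
      ((↑(D.map (fun p => s(p.1, p.2))) : Multiset (Sym2 V)) ≤
        ↑(Dplus.map (fun p => s(p.1, p.2)))) ∧
      Relation.ReflTransGen Lift Dplus D' ∧
      (∀ v, mdeg D' v = 2 * (Fintype.card V / 6) - 4) ∧
      (Resolvable D' → Resolvable D) :=
  regularize_demand_graph_general hn D hloop hΔ
end
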